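/- arXiv:2312.04550 — 2 statements merged into one kernel-verified Lean document; each statement's English description precedes it below -/
import Mathlib

section
/- Let (Ω, 𝓕, ℙ) be a probability space, σ : Ω → Ω a ℙ-preserving transformation, q > 0, and B : Ω → [0,∞) with B ∈ L^q(ℙ). Then for every sequence of positive numbers (a_n)_{n≥1} with Σ_{n≥1} a_n^q < ∞ there exists a random variable R ∈ L^q(ℙ) such that B(σⁿω) ≤ R(ω)·a_n^{−1} for ℙ-a.e. ω ∈ Ω and all n ≥ 1, and moreover ‖R‖_{L^q(ℙ)}^q ≤ ‖B‖_{L^q(ℙ)}^q · Σ_{n≥1} a_n^q. -/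
open MeasureTheory
open scoped ENNReal

/-!
Take `R = (∑_{n ≥ 1} aₙ^q · (B ∘ σⁿ)^q)^{1/q}`. Each summand dominates `(aₙ · B ∘ σⁿ)^q`, and since
every `σⁿ` preserves `ℙ`, monotone convergence gives `∫ R^q = (∑ aₙ^q) · ∫ B^q`; in particular the
sum is finite almost everywhere, so `R` is a genuine real-valued function in `L^q`.
-/

section

variable {Ω : Type*} [MeasurableSpace Ω] {μ : Measure Ω} {q : ℝ}

theorem MeasureTheory.eLpNorm_ofReal_rpow_eq_lintegral (hq : 0 < q) (f : Ω → ℝ) :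
    eLpNorm f (ENNReal.ofReal q) μ ^ q = ∫⁻ ω, ‖f ω‖ₑ ^ q ∂μ := by
  have := eLpNorm_nnreal_pow_eq_lintegral (μ := μ) (f := f) (p := q.toNNReal) (by simpa using hq)
  rwa [Real.coe_toNNReal q hq.le] at this

theorem MeasureTheory.lintegral_tsum_mul_comp {τ : ℕ → Ω → Ω}
    (hτ : ∀ n, MeasurePreserving (τ n) μ μ) {f : Ω → ℝ≥0∞} (hf : AEMeasurable f μ) (c : ℕ → ℝ≥0∞) :
    ∫⁻ ω, ∑' n, c n * f (τ n ω) ∂μ = (∑' n, c n) * ∫⁻ ω, f ω ∂μ := by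
  have hfτ : ∀ n, AEMeasurable (fun ω => f (τ n ω)) μ := fun n =>
    hf.comp_quasiMeasurePreserving (hτ n).quasiMeasurePreserving
  have hcomp : ∀ n, ∫⁻ ω, f (τ n ω) ∂μ = ∫⁻ ω, f ω ∂μ := fun n => by
    rw [← lintegral_map' ((hτ n).map_eq.symm ▸ hf) (hτ n).aemeasurable, (hτ n).map_eq]
  simp_rw [lintegral_tsum fun n => (hfτ n).const_mul (c n), lintegral_const_mul'' _ (hfτ _), hcomp,
    ENNReal.tsum_mul_right]

theorem eLpNorm_toReal_rpow_inv_rpow (hq : 0 < q) {F : Ω → ℝ≥0∞} (hF : ∀ᵐ ω ∂μ, F ω ≠ ∞) :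
    eLpNorm (fun ω => (F ω ^ q⁻¹).toReal) (ENNReal.ofReal q) μ ^ q = ∫⁻ ω, F ω ∂μ := by
  rw [eLpNorm_ofReal_rpow_eq_lintegral hq]
  refine lintegral_congr_ae ?_
  filter_upwards [hF] with ω hω
  rw [Real.enorm_eq_ofReal ENNReal.toReal_nonneg, ENNReal.ofReal_toReal (by finiteness),
    ← ENNReal.rpow_mul, inv_mul_cancel₀ hq.ne', ENNReal.rpow_one]

theorem memLp_toReal_rpow_inv (hq : 0 < q) {F : Ω → ℝ≥0∞} (hF : AEMeasurable F μ)
    (hint : ∫⁻ ω, F ω ∂μ ≠ ∞) : MemLp (fun ω => (F ω ^ q⁻¹).toReal) (ENNReal.ofReal q) μ := by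
  refine ⟨(hF.pow_const _).ennreal_toReal.aestronglyMeasurable, ?_⟩
  have hF_ae : ∀ᵐ ω ∂μ, F ω ≠ ∞ := (ae_lt_top' hF hint).mono fun _ => ne_of_lt
  rw [← ENNReal.rpow_lt_top_iff_of_pos hq, eLpNorm_toReal_rpow_inv_rpow hq hF_ae]
  exact hint.lt_top

theorem ENNReal.tsum_enorm_rpow_eq_ofReal_tsum {ι : Type*} {f : ι → ℝ} (hf : ∀ i, 0 ≤ f i)
    (hq : 0 ≤ q) (hs : Summable fun i => f i ^ q) :
    ∑' i, ‖f i‖ₑ ^ q = ENNReal.ofReal (∑' i, f i ^ q) := by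
  rw [ENNReal.ofReal_tsum_of_nonneg (fun i => Real.rpow_nonneg (hf i) q) hs]
  congr 1 with i
  rw [Real.enorm_of_nonneg (hf i), ENNReal.ofReal_rpow_of_nonneg (hf i) hq]

theorem le_toReal_rpow_inv_of_enorm_rpow_le (hq : 0 < q) {x : ℝ} {y : ℝ≥0∞} (hy : y ≠ ∞)
    (h : ‖x‖ₑ ^ q ≤ y) : x ≤ (y ^ q⁻¹).toReal := by
  have : ‖x‖ₑ ≤ y ^ q⁻¹ := by
    simpa [← ENNReal.rpow_mul, mul_inv_cancel₀ hq.ne'] using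
      ENNReal.rpow_le_rpow h (inv_nonneg.mpr hq.le)
  calc x ≤ ‖x‖ := Real.le_norm_self x
    _ = ‖x‖ₑ.toReal := by simp
    _ ≤ (y ^ q⁻¹).toReal := ENNReal.toReal_mono (by finiteness) this

end

theorem tempering_lemma_general
    {Ω : Type*} [MeasurableSpace Ω]
    (ℙ : Measure Ω)
    (σ : Ω → Ω) (hσ : MeasurePreserving σ ℙ ℙ)
    (q : ℝ) (hq : 0 < q)
    (B : Ω → ℝ)
    (hBq : MemLp B (ENNReal.ofReal q) ℙ)
    (a : ℕ → ℝ) (ha : ∀ n : ℕ, 1 ≤ n → 0 < a n)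
    (hasum : Summable fun n : ℕ => a (n + 1) ^ q) :
    ∃ R : Ω → ℝ, MemLp R (ENNReal.ofReal q) ℙ ∧
      (∀ᵐ ω ∂ℙ, ∀ n : ℕ, 1 ≤ n → B (σ^[n] ω) ≤ R ω * (a n)⁻¹) ∧
      eLpNorm R (ENNReal.ofReal q) ℙ ^ q
        ≤ eLpNorm B (ENNReal.ofReal q) ℙ ^ q * ENNReal.ofReal (∑' n : ℕ, a (n + 1) ^ q) := by
  set F : Ω → ℝ≥0∞ := fun ω => ∑' n, ‖a (n + 1)‖ₑ ^ q * ‖B (σ^[n + 1] ω)‖ₑ ^ q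
  have hF : AEMeasurable F ℙ := AEMeasurable.tsum fun n =>
    ((hBq.1.aemeasurable.comp_quasiMeasurePreserving
      (hσ.iterate (n + 1)).quasiMeasurePreserving).enorm.pow_const q).const_mul _
  have ha_nonneg : ∀ n, 0 ≤ a (n + 1) := fun n => (ha (n + 1) (by omega)).le
  have hintF : ∫⁻ ω, F ω ∂ℙ =
      ENNReal.ofReal (∑' n, a (n + 1) ^ q) * eLpNorm B (ENNReal.ofReal q) ℙ ^ q := by
    rw [lintegral_tsum_mul_comp (fun n => hσ.iterate (n + 1)) (hBq.1.enorm.pow_const q),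
      ENNReal.tsum_enorm_rpow_eq_ofReal_tsum ha_nonneg hq.le hasum,
      eLpNorm_ofReal_rpow_eq_lintegral hq]
  have hintF_ne_top : ∫⁻ ω, F ω ∂ℙ ≠ ∞ := by
    rw [hintF]
    exact ENNReal.mul_ne_top ENNReal.ofReal_ne_top
      (ENNReal.rpow_ne_top_of_nonneg hq.le hBq.eLpNorm_ne_top)
  have hF_ae : ∀ᵐ ω ∂ℙ, F ω ≠ ∞ := (ae_lt_top' hF hintF_ne_top).mono fun _ => ne_of_lt
  refine ⟨fun ω => (F ω ^ q⁻¹).toReal, memLp_toReal_rpow_inv hq hF hintF_ne_top, ?_, ?_⟩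
  · filter_upwards [hF_ae] with ω hω n hn
    obtain ⟨m, rfl⟩ : ∃ m, n = m + 1 := ⟨n - 1, by omega⟩
    have hterm : ‖a (m + 1) * B (σ^[m + 1] ω)‖ₑ ^ q ≤ F ω := by
      rw [enorm_mul, ENNReal.mul_rpow_of_nonneg _ _ hq.le]
      exact ENNReal.le_tsum (f := fun n => ‖a (n + 1)‖ₑ ^ q * ‖B (σ^[n + 1] ω)‖ₑ ^ q) m
    rw [← div_eq_mul_inv, le_div_iff₀ (ha _ hn), mul_comm]
    exact le_toReal_rpow_inv_of_enorm_rpow_le hq hω hterm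
  · rw [eLpNorm_toReal_rpow_inv_rpow hq hF_ae, hintF, mul_comm]

/-- **Tempering lemma.** If `B ∈ L^q(ℙ)` and `Σ aₙ^q < ∞`, then there is `R ∈ L^q(ℙ)` with
`B(σⁿω) ≤ R(ω)·aₙ⁻¹` a.e. and `‖R‖_q^q ≤ ‖B‖_q^q · Σ aₙ^q`. -/
theorem tempering_lemma
    {Ω : Type*} [MeasurableSpace Ω]
    (ℙ : Measure Ω) [IsProbabilityMeasure ℙ]
    (σ : Ω → Ω) (hσ : MeasurePreserving σ ℙ ℙ)
    (q : ℝ) (hq : 0 < q)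
    (B : Ω → ℝ) (hB0 : ∀ ω, 0 ≤ B ω) (hBmeas : Measurable B)
    (hBq : MemLp B (ENNReal.ofReal q) ℙ)
    (a : ℕ → ℝ) (ha : ∀ n : ℕ, 1 ≤ n → 0 < a n)
    (hasum : Summable fun n : ℕ => a (n + 1) ^ q) :
    ∃ R : Ω → ℝ, MemLp R (ENNReal.ofReal q) ℙ ∧
      (∀ᵐ ω ∂ℙ, ∀ n : ℕ, 1 ≤ n → B (σ^[n] ω) ≤ R ω * (a n)⁻¹) ∧
      eLpNorm R (ENNReal.ofReal q) ℙ ^ q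
        ≤ eLpNorm B (ENNReal.ofReal q) ℙ ^ q * ENNReal.ofReal (∑' n : ℕ, a (n + 1) ^ q) :=
  tempering_lemma_general ℙ σ hσ q hq B hBq a ha hasum
end

section
/- Suppose limsup_{k→∞} ψ_U(k) < 1/𝔼_ℙ[ρ] − 1, where 𝔼_ℙ[ρ] = ∫_Ω ρ dℙ < 1. Assume further that there are positive numbers β_r with β_r → 0 and random variables ρ_r : Ω → (0,∞), each ρ_r measurable with respect to σ{X_j : |j| ≤ r}, such that ‖ρ − ρ_r‖_{L^∞(ℙ)} ≤ β_r for every r. Then for every q ≥ 1 there exists δ = δ_q ∈ (0,1) such that ‖ρ_{ω,n}‖_{L^q(ℙ)} ≤ δⁿ for all n ≥ 1, where ρ_{ω,n} := Π_{j=0}^{n−1} ρ(σ^j ω). -/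
open MeasureTheory Filter Topology
open scoped ENNReal

/-!
Split the orbit into windows of length `2r + 1`, where `r` is chosen so that `ρ` is uniformly
within `η` of a function `ρ'` of the coordinates `|j| ≤ r`. Off the local event
`D = {ρ' > a' + η}` we have `ρ ≤ a < 1`, and `a'` is taken so close to `1` that
`ℙ(D) (1 + ψ_U(1)) < 1`. Bound `ρ ∘ σ^(i(2r+1))` by `a + (1 - a) 1_D ∘ σ^(i(2r+1))` and
expand the product of these bounds over subsets of windows: by ψ-mixing with gap one,
`ℙ(⋂_{i ∈ t} σ^(-i(2r+1)) D) ≤ (ℙ(D) (1 + ψ_U(1)))^|t|`, so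
`𝔼 ρ_{ω,n} ≤ (a + (1 - a) ℙ(D) (1 + ψ_U(1)))^⌈n/(2r+1)⌉`. Finally `0 ≤ ρ_{ω,n} ≤ 1` gives
`‖ρ_{ω,n}‖_q ≤ (𝔼 ρ_{ω,n})^(1/q)`.
-/

theorem Finset.prod_indicator_one_eq_indicator_biInter {Ω ι M : Type*} [CommMonoidWithZero M]
    (s : Finset ι) (C : ι → Set Ω) (ω : Ω) :
    ∏ i ∈ s, (C i).indicator (1 : Ω → M) ω = (⋂ i ∈ s, C i).indicator 1 ω := by
  by_cases hω : ω ∈ ⋂ i ∈ s, C i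
  · rw [Set.indicator_of_mem hω]
    exact Finset.prod_eq_one fun i hi => Set.indicator_of_mem (Set.mem_iInter₂.mp hω i hi) _
  · rw [Set.indicator_of_notMem hω]
    obtain ⟨i, hi, hωi⟩ : ∃ i ∈ s, ω ∉ C i := by simpa using hω
    exact Finset.prod_eq_zero hi (Set.indicator_of_notMem hωi _)

theorem ENNReal.ofReal_le_add_mul_indicator {Ω : Type*} {D : Set Ω} {ω : Ω} {y a : ℝ}
    (hy : y < 1) (ha0 : 0 ≤ a) (ha1 : a ≤ 1) (h : ω ∉ D → y ≤ a) :
    ENNReal.ofReal y ≤ ENNReal.ofReal a + ENNReal.ofReal (1 - a) * D.indicator 1 ω := by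
  by_cases hω : ω ∈ D
  · rw [Set.indicator_of_mem hω, Pi.one_apply, mul_one,
      ← ENNReal.ofReal_add ha0 (sub_nonneg.2 ha1), add_sub_cancel]
    exact ENNReal.ofReal_le_ofReal hy.le
  · rw [Set.indicator_of_notMem hω, mul_zero, add_zero]
    exact ENNReal.ofReal_le_ofReal (h hω)

theorem ENNReal.ofReal_prod_range_le_prod_range_mul {f : ℕ → ℝ} (hf0 : ∀ j, 0 ≤ f j)
    (hf1 : ∀ j, f j ≤ 1) {n m L : ℕ} (hL : 0 < L) (hm : ∀ i < m, i * L < n) :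
    ENNReal.ofReal (∏ j ∈ Finset.range n, f j) ≤
      ∏ i ∈ Finset.range m, ENNReal.ofReal (f (i * L)) := by
  rw [ENNReal.ofReal_prod_of_nonneg fun j _ => hf0 j]
  calc ∏ j ∈ Finset.range n, ENNReal.ofReal (f j)
      ≤ ∏ j ∈ (Finset.range m).image (· * L), ENNReal.ofReal (f j) :=
        Finset.prod_le_prod_of_subset_of_le_one'
          (fun j hj => by
            obtain ⟨i, hi, rfl⟩ := Finset.mem_image.mp hj
            exact Finset.mem_range.2 (hm i (Finset.mem_range.1 hi)))
          fun j _ _ => ENNReal.ofReal_le_one.2 (hf1 j)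
    _ = ∏ i ∈ Finset.range m, ENNReal.ofReal (f (i * L)) :=
        Finset.prod_image fun i _ j _ hij => Nat.eq_of_mul_eq_mul_right hL hij

theorem Real.pow_le_rpow_inv_pow {c : ℝ} (hc0 : 0 < c) (hc1 : c ≤ 1) {m n L : ℕ} (hL : 0 < L)
    (h : n ≤ L * m) : c ^ m ≤ (c ^ (L⁻¹ : ℝ)) ^ n := by
  rw [← Real.rpow_natCast (c ^ _), ← Real.rpow_mul hc0.le, ← Real.rpow_natCast c m]
  apply Real.rpow_le_rpow_of_exponent_ge hc0 hc1
  rw [inv_mul_le_iff₀ (by positivity)]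
  exact_mod_cast h

section Measure

variable {Ω : Type*} [MeasurableSpace Ω] {μ : Measure Ω}

theorem measure_inter_le_mul_ofReal_of_toReal_le [IsFiniteMeasure μ] {A B : Set Ω} {c : ℝ}
    (h : (μ (A ∩ B)).toReal ≤ (μ A).toReal * (μ B).toReal * c) :
    μ (A ∩ B) ≤ μ A * μ B * ENNReal.ofReal c :=
  calc μ (A ∩ B) = ENNReal.ofReal (μ (A ∩ B)).toReal :=
        (ENNReal.ofReal_toReal (measure_ne_top _ _)).symm
    _ ≤ ENNReal.ofReal ((μ A).toReal * (μ B).toReal * c) := ENNReal.ofReal_le_ofReal h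
    _ = μ A * μ B * ENNReal.ofReal c := by
      rw [ENNReal.ofReal_mul (by positivity), ENNReal.ofReal_mul (by positivity),
        ENNReal.ofReal_toReal (measure_ne_top _ _), ENNReal.ofReal_toReal (measure_ne_top _ _)]

theorem exists_measure_setOf_lt_lt [IsFiniteMeasure μ] {f : Ω → ℝ} (hf : Measurable f)
    (hf1 : ∀ ω, f ω < 1) {η : ℝ≥0∞} (hη : 0 < η) :
    ∃ a, 0 < a ∧ a < 1 ∧ μ {ω | a < f ω} < η := by
  have htend := tendsto_measure_biInter_gt (μ := μ) (s := fun ε : ℝ => {ω | 1 - ε < f ω})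
    (a := 0) (fun _ _ => (measurableSet_lt measurable_const hf).nullMeasurableSet)
    (fun _ _ _ hij ω (hω : 1 - _ < f ω) => show 1 - _ < f ω by linarith)
    ⟨1, one_pos, measure_ne_top _ _⟩
  have hempty : ⋂ ε > (0 : ℝ), {ω | 1 - ε < f ω} = ∅ :=
    Set.eq_empty_of_forall_notMem fun ω hω => by
      have := Set.mem_iInter₂.mp hω (1 - f ω) (by linarith [hf1 ω])
      simp at this
  rw [hempty, measure_empty] at htend
  have hsmall : ∀ᶠ ε in 𝓝[>] (0 : ℝ), μ {ω | 1 - ε < f ω} < η := htend (gt_mem_nhds hη)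
  have hunit : ∀ᶠ ε in 𝓝[>] (0 : ℝ), ε ∈ Set.Ioo 0 1 := Ioo_mem_nhdsGT one_pos
  obtain ⟨ε, hε, hεη⟩ := (hunit.and hsmall).exists
  exact ⟨1 - ε, by linarith [hε.2], by linarith [hε.1], hεη⟩

theorem ae_abs_le_of_eLpNorm_top_le {f : Ω → ℝ} {η : ℝ} (hη : 0 ≤ η)
    (h : eLpNorm f ⊤ μ ≤ ENNReal.ofReal η) : ∀ᵐ ω ∂μ, |f ω| ≤ η := by
  filter_upwards [ae_le_eLpNormEssSup (f := f)] with ω hω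
  rw [← eLpNorm_exponent_top] at hω
  rw [← ENNReal.ofReal_le_ofReal_iff hη, ← Real.enorm_eq_ofReal_abs]
  exact hω.trans h

theorem eLpNorm_le_lintegral_rpow_of_le_one {f : Ω → ℝ} (hf0 : ∀ ω, 0 ≤ f ω)
    (hf1 : ∀ ω, f ω ≤ 1) {q : ℝ} (hq : 1 ≤ q) :
    eLpNorm f (ENNReal.ofReal q) μ ≤ (∫⁻ ω, ENNReal.ofReal (f ω) ∂μ) ^ q⁻¹ := by
  rw [eLpNorm_eq_lintegral_rpow_enorm_toReal (ENNReal.ofReal_pos.2 (by linarith)).ne'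
    ENNReal.ofReal_ne_top,
    ENNReal.toReal_ofReal (by linarith), one_div]
  gcongr with ω
  rw [Real.enorm_eq_ofReal_abs, abs_of_nonneg (hf0 ω)]
  exact ENNReal.rpow_le_self_of_le_one (ENNReal.ofReal_le_one.2 (hf1 ω)) hq

theorem measure_biInter_le_pow_of_mixing [IsZeroOrProbabilityMeasure μ]
    (F G : ℕ → MeasurableSpace Ω) {K p : ℝ≥0∞}
    (hmix : ∀ j A B, MeasurableSet[F j] A → MeasurableSet[G j] B → μ (A ∩ B) ≤ μ A * μ B * K)
    {C : ℕ → Set Ω} (hCF : ∀ i j, i < j → MeasurableSet[F j] (C i))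
    (hCG : ∀ j, MeasurableSet[G j] (C j)) (hCp : ∀ i, μ (C i) ≤ p) (s : Finset ℕ) :
    μ (⋂ i ∈ s, C i) ≤ (p * K) ^ s.card := by
  induction s using Finset.induction_on_max with
  | empty => simpa using prob_le_one
  | insert a s hlt ih =>
    rw [Finset.set_biInter_insert, Set.inter_comm,
      Finset.card_insert_of_notMem fun ha => lt_irrefl a (hlt a ha), pow_succ]
    calc μ ((⋂ i ∈ s, C i) ∩ C a) ≤ μ (⋂ i ∈ s, C i) * μ (C a) * K :=
          hmix a _ _ (Finset.measurableSet_biInter s fun i hi => hCF i a (hlt i hi)) (hCG a)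
      _ ≤ (p * K) ^ s.card * p * K := by gcongr; exact hCp a
      _ = (p * K) ^ s.card * (p * K) := by ring

theorem lintegral_prod_add_mul_indicator_le {ι : Type*} [DecidableEq ι] (s : Finset ι)
    {C : ι → Set Ω} (hC : ∀ i, MeasurableSet (C i)) (A B : ℝ≥0∞) {Q : ℝ≥0∞}
    (hQ : ∀ t ⊆ s, μ (⋂ i ∈ t, C i) ≤ Q ^ t.card) :
    ∫⁻ ω, ∏ i ∈ s, (A + B * (C i).indicator 1 ω) ∂μ ≤ (A + B * Q) ^ s.card := by
  have hexpand : ∀ ω, ∏ i ∈ s, (A + B * (C i).indicator 1 ω) =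
      ∑ t ∈ s.powerset, B ^ t.card * A ^ (s \ t).card * (⋂ i ∈ t, C i).indicator 1 ω := by
    intro ω
    simp_rw [add_comm A, Finset.prod_add, Finset.prod_mul_distrib, Finset.prod_const,
      Finset.prod_indicator_one_eq_indicator_biInter]
    refine Finset.sum_congr rfl fun t _ => by ring
  calc ∫⁻ ω, ∏ i ∈ s, (A + B * (C i).indicator 1 ω) ∂μ
      = ∑ t ∈ s.powerset, B ^ t.card * A ^ (s \ t).card * μ (⋂ i ∈ t, C i) := by
        simp_rw [hexpand]
        have hCt : ∀ t : Finset ι, MeasurableSet (⋂ i ∈ t, C i) :=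
          fun t => Finset.measurableSet_biInter t fun i _ => hC i
        rw [lintegral_finsetSum _ fun t _ => (measurable_one.indicator (hCt t)).const_mul _]
        refine Finset.sum_congr rfl fun t _ => ?_
        rw [lintegral_const_mul _ (measurable_one.indicator (hCt t)),
          lintegral_indicator_one (hCt t)]
    _ ≤ ∑ t ∈ s.powerset, B ^ t.card * A ^ (s \ t).card * Q ^ t.card :=
        Finset.sum_le_sum fun t ht => by gcongr; exact hQ t (Finset.mem_powerset.mp ht)
    _ = (A + B * Q) ^ s.card := by
        rw [add_comm A, ← Finset.prod_const, Finset.prod_add]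
        refine Finset.sum_congr rfl fun t _ => ?_
        simp only [Finset.prod_const, mul_pow]
        ring

end Measure

theorem comp_iterate_eq_of_shift {Ω S : Type*} {σ : Ω → Ω} {X : ℤ → Ω → S}
    (hshift : ∀ j ω, X j (σ ω) = X (j + 1) ω) (t : ℕ) (j : ℤ) :
    X j ∘ σ^[t] = X (j + t) := by
  induction t generalizing j with
  | zero => simp
  | succ t ih =>
    ext ω
    rw [Function.comp_apply, Function.iterate_succ_apply, ← Function.comp_apply (f := X j),
      ih, hshift]
    push_cast
    ring_nf

abbrev processSigma {Ω S : Type*} [MeasurableSpace S] (X : ℤ → Ω → S) (I : Set ℤ) :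
    MeasurableSpace Ω :=
  ⨆ j ∈ I, MeasurableSpace.comap (X j) ‹MeasurableSpace S›

theorem measurableSet_processSigma_preimage_iterate {Ω S : Type*} [MeasurableSpace S]
    {σ : Ω → Ω} {X : ℤ → Ω → S} (hshift : ∀ j ω, X j (σ ω) = X (j + 1) ω)
    {I J : Set ℤ} {t : ℕ} (hIJ : ∀ j ∈ I, j + t ∈ J) {A : Set Ω}
    (hA : MeasurableSet[processSigma X I] A) :
    MeasurableSet[processSigma X J] (σ^[t] ⁻¹' A) := by
  have hcomap : (processSigma X I).comap σ^[t] ≤ processSigma X J := by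
    simp only [processSigma, MeasurableSpace.comap_iSup, MeasurableSpace.comap_comp,
      comp_iterate_eq_of_shift hshift]
    exact iSup₂_le fun j hj => le_iSup₂ (f := fun j (_ : j ∈ J) =>
      MeasurableSpace.comap (X j) ‹MeasurableSpace S›) (j + t) (hIJ j hj)
  exact hcomap _ ⟨A, hA, rfl⟩

section Shift

variable {Ω S : Type*} [MeasurableSpace Ω] [MeasurableSpace S] {μ : Measure Ω}
  {σ : Ω → Ω} {X : ℤ → Ω → S}

theorem processSigma_le (hX : ∀ j, Measurable (X j)) (I : Set ℤ) :
    processSigma X I ≤ ‹MeasurableSpace Ω› :=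
  iSup₂_le fun j _ => (hX j).comap_le

theorem measure_biInter_preimage_iterate_le [IsZeroOrProbabilityMeasure μ]
    (hσ : MeasurePreserving σ μ μ) (hshift : ∀ j ω, X j (σ ω) = X (j + 1) ω) {K : ℝ≥0∞}
    (hmix : ∀ (n : ℤ) (A B : Set Ω), MeasurableSet[processSigma X (Set.Iic n)] A →
      MeasurableSet[processSigma X (Set.Ici (n + 1))] B → μ (A ∩ B) ≤ μ A * μ B * K)
    {r : ℕ} {D : Set Ω} (hDσ : MeasurableSet[processSigma X {j | |j| ≤ r}] D)
    (hD : MeasurableSet D) (s : Finset ℕ) :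
    μ (⋂ i ∈ s, σ^[i * (2 * r + 1)] ⁻¹' D) ≤ (μ D * K) ^ s.card := by
  -- `σ^[j(2r+1)] ⁻¹' D` only sees the coordinates in `[j(2r+1) - r, j(2r+1) + r]`; these
  -- windows tile `ℤ`, so window `j` is at distance one from everything before it.
  refine measure_biInter_le_pow_of_mixing
    (fun j => processSigma X (Set.Iic (((j * (2 * r + 1) : ℕ) : ℤ) - r - 1)))
    (fun j => processSigma X (Set.Ici (((j * (2 * r + 1) : ℕ) : ℤ) - r - 1 + 1)))
    (fun j => hmix _) (fun i j hij => ?_) (fun j => ?_)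
    (fun i => ((hσ.iterate _).measure_preimage hD.nullMeasurableSet).le) s
  · refine measurableSet_processSigma_preimage_iterate hshift (fun k hk => ?_) hDσ
    have hblock : (i + 1) * (2 * r + 1) ≤ j * (2 * r + 1) := Nat.mul_le_mul_right _ hij
    rw [add_mul, one_mul] at hblock
    simp only [Set.mem_ofPred_eq, abs_le] at hk
    simp only [Set.mem_Iic]
    omega
  · refine measurableSet_processSigma_preimage_iterate hshift (fun k hk => ?_) hDσ
    simp only [Set.mem_ofPred_eq, abs_le] at hk
    simp only [Set.mem_Ici]
    omega

theorem lintegral_ofReal_prod_iterate_le [IsZeroOrProbabilityMeasure μ]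
    (hσ : MeasurePreserving σ μ μ) (hX : ∀ j, Measurable (X j))
    (hshift : ∀ j ω, X j (σ ω) = X (j + 1) ω) {K : ℝ≥0∞}
    (hmix : ∀ (n : ℤ) (A B : Set Ω), MeasurableSet[processSigma X (Set.Iic n)] A →
      MeasurableSet[processSigma X (Set.Ici (n + 1))] B → μ (A ∩ B) ≤ μ A * μ B * K)
    {ρ : Ω → ℝ} (hρ0 : ∀ ω, 0 ≤ ρ ω) (hρ1 : ∀ ω, ρ ω < 1) {a : ℝ} (ha0 : 0 ≤ a) (ha1 : a ≤ 1)
    {r : ℕ} {D : Set Ω} (hDσ : MeasurableSet[processSigma X {j | |j| ≤ r}] D)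
    (hρD : ∀ᵐ ω ∂μ, ∀ i, σ^[i] ω ∉ D → ρ (σ^[i] ω) ≤ a) (n : ℕ) :
    ∫⁻ ω, ENNReal.ofReal (∏ j ∈ Finset.range n, ρ (σ^[j] ω)) ∂μ ≤
      (ENNReal.ofReal a + ENNReal.ofReal (1 - a) * (μ D * K)) ^ (n ⌈/⌉ (2 * r + 1)) := by
  have hL : 0 < 2 * r + 1 := by omega
  have hD : MeasurableSet D := processSigma_le hX _ _ hDσ
  have hblocks : ∀ i < n ⌈/⌉ (2 * r + 1), i * (2 * r + 1) < n := fun i hi => by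
    rw [mul_comm]
    exact not_le.1 fun h => hi.not_ge ((ceilDiv_le_iff_le_mul hL).2 h)
  calc ∫⁻ ω, ENNReal.ofReal (∏ j ∈ Finset.range n, ρ (σ^[j] ω)) ∂μ
      ≤ ∫⁻ ω, ∏ i ∈ Finset.range (n ⌈/⌉ (2 * r + 1)), (ENNReal.ofReal a +
          ENNReal.ofReal (1 - a) * (σ^[i * (2 * r + 1)] ⁻¹' D).indicator 1 ω) ∂μ := by
        refine lintegral_mono_ae (hρD.mono fun ω hω => ?_)
        refine (ENNReal.ofReal_prod_range_le_prod_range_mul (fun j => hρ0 _)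
          (fun j => (hρ1 _).le) hL hblocks).trans (Finset.prod_le_prod' fun i _ => ?_)
        exact ENNReal.ofReal_le_add_mul_indicator (hρ1 _) ha0 ha1 (hω _)
    _ ≤ _ := (lintegral_prod_add_mul_indicator_le _
        (fun i => (hσ.measurable.iterate _) hD) _ _
        fun t _ => measure_biInter_preimage_iterate_le hσ hshift hmix hDσ hD t).trans_eq
          (by rw [Finset.card_range])

end Shift

theorem exists_le_ofReal_pow_of_le_pow_ceilDiv {u : ℕ → ℝ≥0∞} {a : ℝ} (ha0 : 0 < a)
    (ha1 : a < 1) {Q : ℝ≥0∞} (hQ : Q < 1) {L : ℕ} (hL : 0 < L)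
    (hu : ∀ n, u n ≤ (ENNReal.ofReal a + ENNReal.ofReal (1 - a) * Q) ^ (n ⌈/⌉ L)) :
    ∃ θ : ℝ, 0 < θ ∧ θ < 1 ∧ ∀ n, u n ≤ ENNReal.ofReal (θ ^ n) := by
  have hQ0 : 0 ≤ Q.toReal := ENNReal.toReal_nonneg
  have hQ1 : Q.toReal < 1 := ENNReal.toReal_lt_of_lt_ofReal (by simpa using hQ)
  set c := a + (1 - a) * Q.toReal
  have hc0 : 0 < c := by nlinarith
  have hc1 : c < 1 := by nlinarith
  refine ⟨c ^ (L⁻¹ : ℝ), Real.rpow_pos_of_pos hc0 _, Real.rpow_lt_one hc0.le hc1 (by positivity),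
    fun n => (hu n).trans ?_⟩
  rw [← ENNReal.ofReal_toReal hQ.ne_top, ← ENNReal.ofReal_mul (by linarith),
    ← ENNReal.ofReal_add ha0.le (by nlinarith), ← ENNReal.ofReal_pow hc0.le]
  exact ENNReal.ofReal_le_ofReal (Real.pow_le_rpow_inv_pow hc0 hc1.le hL
    ((ceilDiv_le_iff_le_mul hL).1 le_rfl))

theorem exists_lintegral_ofReal_prod_iterate_le_pow {Ω S : Type*} [MeasurableSpace Ω]
    [MeasurableSpace S] {μ : Measure Ω} [IsProbabilityMeasure μ] {σ : Ω → Ω} {X : ℤ → Ω → S}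
    (hσ : MeasurePreserving σ μ μ) (hX : ∀ j, Measurable (X j))
    (hshift : ∀ j ω, X j (σ ω) = X (j + 1) ω) {K : ℝ≥0∞} (hK : K ≠ ∞)
    (hmix : ∀ (n : ℤ) (A B : Set Ω), MeasurableSet[processSigma X (Set.Iic n)] A →
      MeasurableSet[processSigma X (Set.Ici (n + 1))] B → μ (A ∩ B) ≤ μ A * μ B * K)
    {ρ : Ω → ℝ} (hρ : Measurable ρ) (hρ0 : ∀ ω, 0 ≤ ρ ω) (hρ1 : ∀ ω, ρ ω < 1)
    (happrox : ∀ η > 0, ∃ (r : ℕ) (ρ' : Ω → ℝ),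
      Measurable[processSigma X {j | |j| ≤ r}] ρ' ∧ ∀ᵐ ω ∂μ, |ρ ω - ρ' ω| ≤ η) :
    ∃ θ : ℝ, 0 < θ ∧ θ < 1 ∧ ∀ n : ℕ,
      ∫⁻ ω, ENNReal.ofReal (∏ j ∈ Finset.range n, ρ (σ^[j] ω)) ∂μ ≤ ENNReal.ofReal (θ ^ n) := by
  obtain ⟨a', ha'0, ha'1, hμa'⟩ :=
    exists_measure_setOf_lt_lt (μ := μ) hρ hρ1 (ENNReal.div_pos one_ne_zero hK)
  obtain ⟨r, ρ', hρ'σ, hρρ'⟩ := happrox ((1 - a') / 4) (by linarith)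
  set D := {ω | a' + (1 - a') / 4 < ρ' ω}
  have hDσ : MeasurableSet[processSigma X {j | |j| ≤ r}] D :=
    measurableSet_lt measurable_const hρ'σ
  have hμD : μ D * K < 1 := by
    refine ENNReal.mul_lt_of_lt_div (lt_of_le_of_lt (measure_mono_ae ?_) hμa')
    filter_upwards [hρρ'] with ω hω hωD
    exact show a' < ρ ω by linarith [(abs_le.1 hω).1, show a' + (1 - a') / 4 < ρ' ω from hωD]
  have hρD : ∀ᵐ ω ∂μ, ∀ i, σ^[i] ω ∉ D → ρ (σ^[i] ω) ≤ (1 + a') / 2 :=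
    ae_all_iff.2 fun i => (hσ.iterate i).quasiMeasurePreserving.ae
      (p := fun ω => ω ∉ D → ρ ω ≤ (1 + a') / 2) (hρρ'.mono fun ω hω hωD => by
        linarith [(abs_le.1 hω).2, not_lt.1 (show ¬a' + (1 - a') / 4 < ρ' ω from hωD)])
  exact exists_le_ofReal_pow_of_le_pow_ceilDiv (by linarith) (by linarith) hμD (by omega)
    (lintegral_ofReal_prod_iterate_le hσ hX hshift hmix hρ0 hρ1 (by linarith) (by linarith)
      hDσ hρD)

theorem rho_norm_exponential_decay_general
    {Ω S : Type*} [MeasurableSpace Ω] [MeasurableSpace S]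
    (ℙ : Measure Ω) [IsProbabilityMeasure ℙ]
    (σ : Ω → Ω) (hσmp : MeasurePreserving σ ℙ ℙ)
    -- the generating two-sided stationary process X
    (X : ℤ → Ω → S) (hXmeas : ∀ j, Measurable (X j))
    (hXshift : ∀ (j : ℤ) (ω : Ω), X j (σ ω) = X (j + 1) ω)
    -- the upper ψ-mixing coefficients
    (ψU : ℕ → ℝ)
    (hψU : ∀ (k : ℕ) (n : ℤ) (Aset Bset : Set Ω),
      MeasurableSet[⨆ (j : ℤ) (_ : j ≤ n), MeasurableSpace.comap (X j) inferInstance] Aset →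
      MeasurableSet[⨆ (j : ℤ) (_ : n + k ≤ j), MeasurableSpace.comap (X j) inferInstance] Bset →
      (ℙ (Aset ∩ Bset)).toReal ≤ (ℙ Aset).toReal * (ℙ Bset).toReal * (1 + ψU k))
    -- the function ρ : Ω → (0,1)
    (ρ : Ω → ℝ) (hρmeas : Measurable ρ) (hρ0 : ∀ ω, 0 < ρ ω) (hρ1 : ∀ ω, ρ ω < 1)
    -- finite-block approximations of ρ
    (βr : ℕ → ℝ) (hβr0 : Tendsto βr atTop (nhds 0))
    (ρr : ℕ → Ω → ℝ)
    (hρrmeas : ∀ r : ℕ,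
      Measurable[⨆ (j : ℤ) (_ : |j| ≤ (r : ℤ)), MeasurableSpace.comap (X j) inferInstance]
        (ρr r))
    (hρrapprox : ∀ r : ℕ, eLpNorm (fun ω => ρ ω - ρr r ω) ⊤ ℙ ≤ ENNReal.ofReal (βr r)) :
    ∀ q : ℝ, 1 ≤ q → ∃ δ : ℝ, 0 < δ ∧ δ < 1 ∧ ∀ n : ℕ, 1 ≤ n →
      eLpNorm (fun ω => ∏ j ∈ Finset.range n, ρ (σ^[j] ω)) (ENNReal.ofReal q) ℙ
        ≤ ENNReal.ofReal (δ ^ n) := by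
  have happrox : ∀ η > 0, ∃ (r : ℕ) (ρ' : Ω → ℝ),
      Measurable[processSigma X {j | |j| ≤ r}] ρ' ∧ ∀ᵐ ω ∂ℙ, |ρ ω - ρ' ω| ≤ η := by
    intro η hη
    obtain ⟨r, hr⟩ := (hβr0.eventually (gt_mem_nhds hη)).exists
    exact ⟨r, ρr r, hρrmeas r, ae_abs_le_of_eLpNorm_top_le hη.le
      ((hρrapprox r).trans (ENNReal.ofReal_le_ofReal hr.le))⟩
  obtain ⟨θ, hθ0, hθ1, hθ⟩ := exists_lintegral_ofReal_prod_iterate_le_pow hσmp hXmeas hXshift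
    ENNReal.ofReal_ne_top (fun n A B hA hB => measure_inter_le_mul_ofReal_of_toReal_le
      (hψU 1 n A B hA (by rw [Nat.cast_one]; exact hB))) hρmeas (fun ω => (hρ0 ω).le) hρ1 happrox
  intro q hq
  refine ⟨θ ^ q⁻¹, Real.rpow_pos_of_pos hθ0 _, Real.rpow_lt_one hθ0.le hθ1 (by positivity),
    fun n _ => ?_⟩
  calc eLpNorm (fun ω => ∏ j ∈ Finset.range n, ρ (σ^[j] ω)) (ENNReal.ofReal q) ℙ
      ≤ (∫⁻ ω, ENNReal.ofReal (∏ j ∈ Finset.range n, ρ (σ^[j] ω)) ∂ℙ) ^ q⁻¹ :=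
        eLpNorm_le_lintegral_rpow_of_le_one
          (fun ω => Finset.prod_nonneg fun j _ => (hρ0 _).le)
          (fun ω => Finset.prod_le_one (fun j _ => (hρ0 _).le) fun j _ => (hρ1 _).le) hq
    _ ≤ ENNReal.ofReal (θ ^ n) ^ q⁻¹ := by gcongr; exact hθ n
    _ = ENNReal.ofReal ((θ ^ q⁻¹) ^ n) := by
        rw [ENNReal.ofReal_rpow_of_nonneg (by positivity) (by positivity),
          ← Real.rpow_natCast, ← Real.rpow_natCast, ← Real.rpow_mul hθ0.le,
          ← Real.rpow_mul hθ0.le, mul_comm]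

/-- **Exponential decay of `‖ρ_{ω,n}‖_{L^q}` under upper ψ-mixing.** -/
theorem rho_norm_exponential_decay
    {Ω S : Type*} [MeasurableSpace Ω] [MeasurableSpace S]
    (ℙ : Measure Ω) [IsProbabilityMeasure ℙ]
    (σ σinv : Ω → Ω) (hσmp : MeasurePreserving σ ℙ ℙ) (hσerg : Ergodic σ ℙ)
    (hσinv : Function.LeftInverse σinv σ ∧ Function.RightInverse σinv σ)
    -- the generating two-sided stationary process X
    (X : ℤ → Ω → S) (hXmeas : ∀ j, Measurable (X j))
    (hXshift : ∀ (j : ℤ) (ω : Ω), X j (σ ω) = X (j + 1) ω)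
    (hXgen : (⨆ j : ℤ, MeasurableSpace.comap (X j) inferInstance) = ‹MeasurableSpace Ω›)
    -- the upper ψ-mixing coefficients
    (ψU : ℕ → ℝ)
    (hψU : ∀ (k : ℕ) (n : ℤ) (Aset Bset : Set Ω),
      MeasurableSet[⨆ (j : ℤ) (_ : j ≤ n), MeasurableSpace.comap (X j) inferInstance] Aset →
      MeasurableSet[⨆ (j : ℤ) (_ : n + k ≤ j), MeasurableSpace.comap (X j) inferInstance] Bset →
      (ℙ (Aset ∩ Bset)).toReal ≤ (ℙ Aset).toReal * (ℙ Bset).toReal * (1 + ψU k))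
    -- the function ρ : Ω → (0,1)
    (ρ : Ω → ℝ) (hρmeas : Measurable ρ) (hρ0 : ∀ ω, 0 < ρ ω) (hρ1 : ∀ ω, ρ ω < 1)
    (hρmean : ∫ ω, ρ ω ∂ℙ < 1)
    (hlimsup : limsup (fun k : ℕ => ψU k) atTop < 1 / (∫ ω, ρ ω ∂ℙ) - 1)
    -- finite-block approximations of ρ
    (βr : ℕ → ℝ) (hβrpos : ∀ r, 0 < βr r) (hβr0 : Tendsto βr atTop (nhds 0))
    (ρr : ℕ → Ω → ℝ) (hρrpos : ∀ r ω, 0 < ρr r ω)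
    (hρrmeas : ∀ r : ℕ,
      Measurable[⨆ (j : ℤ) (_ : |j| ≤ (r : ℤ)), MeasurableSpace.comap (X j) inferInstance]
        (ρr r))
    (hρrapprox : ∀ r : ℕ, eLpNorm (fun ω => ρ ω - ρr r ω) ⊤ ℙ ≤ ENNReal.ofReal (βr r)) :
    ∀ q : ℝ, 1 ≤ q → ∃ δ : ℝ, 0 < δ ∧ δ < 1 ∧ ∀ n : ℕ, 1 ≤ n →
      eLpNorm (fun ω => ∏ j ∈ Finset.range n, ρ (σ^[j] ω)) (ENNReal.ofReal q) ℙ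
        ≤ ENNReal.ofReal (δ ^ n) :=
  rho_norm_exponential_decay_general ℙ σ hσmp X hXmeas hXshift ψU hψU ρ hρmeas hρ0 hρ1 βr hβr0 ρr
    hρrmeas hρrapprox
end
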